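/- arXiv:2105.06654 — 2 statements merged into one kernel-verified Lean document; each statement's English description precedes it below -/
import Mathlib

section
/- Let G be the progressive enlargement of F by a random time θ. For any two finite G-stopping times σ̂ ≤ τ̂ there exist finite F-stopping times σ ≤ τ such that σ ∧ θ = σ̂ ∧ θ and τ ∧ θ = τ̂ ∧ θ almost surely. -/
open MeasureTheory Filter Set

/-! Reduce `σ̂` and `τ̂` separately to `𝒻`-stopping times `r` and `τ`; then `σ := r ∧ τ` is an
`𝒻`-stopping time below `τ`, and since `σ̂ ≤ τ̂` it still agrees with `σ̂` before `θ`. -/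

theorem inf_inf_eq_inf_of_le {α : Type*} [SemilatticeInf α] {a b r s θ : α} (hab : a ≤ b)
    (hr : r ⊓ θ = a ⊓ θ) (hs : s ⊓ θ = b ⊓ θ) : r ⊓ s ⊓ θ = a ⊓ θ :=
  calc r ⊓ s ⊓ θ = r ⊓ θ ⊓ (s ⊓ θ) := by rw [inf_inf_inf_comm, inf_idem]
    _ = a ⊓ θ ⊓ (b ⊓ θ) := by rw [hr, hs]
    _ = a ⊓ b ⊓ θ := by rw [inf_inf_inf_comm, inf_idem]
    _ = a ⊓ θ := by rw [inf_eq_left.2 hab]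

theorem reduction_of_ordered_stopping_times_general
    {Ω : Type*} {m0 : MeasurableSpace Ω} (μ : Measure Ω)
    (𝒻 𝒢 : Filtration ℝ m0) (θ : Ω → ℝ)
    (hred : ∀ ρ : Ω → ℝ, IsStoppingTime 𝒢 (fun ω => (ρ ω : WithTop ℝ)) →
      ∃ r : Ω → ℝ, IsStoppingTime 𝒻 (fun ω => (r ω : WithTop ℝ)) ∧ ∀ᵐ ω ∂μ, min (r ω) (θ ω) = min (ρ ω) (θ ω))
    (sigmahat tauhat : Ω → ℝ)
    (hsig : IsStoppingTime 𝒢 (fun ω => (sigmahat ω : WithTop ℝ))) (htau : IsStoppingTime 𝒢 (fun ω => (tauhat ω : WithTop ℝ)))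
    (hle : sigmahat ≤ tauhat) :
    ∃ σ τ : Ω → ℝ, IsStoppingTime 𝒻 (fun ω => (σ ω : WithTop ℝ)) ∧ IsStoppingTime 𝒻 (fun ω => (τ ω : WithTop ℝ)) ∧ σ ≤ τ ∧
      (∀ᵐ ω ∂μ, min (σ ω) (θ ω) = min (sigmahat ω) (θ ω)) ∧
      (∀ᵐ ω ∂μ, min (τ ω) (θ ω) = min (tauhat ω) (θ ω)) := by
  obtain ⟨r, hr, hr_eq⟩ := hred sigmahat hsig
  obtain ⟨τ, hτ, hτ_eq⟩ := hred tauhat htau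
  refine ⟨fun ω => min (r ω) (τ ω), τ, by exact hr.min hτ, hτ, fun ω => min_le_right _ _, ?_, hτ_eq⟩
  filter_upwards [hr_eq, hτ_eq] with ω hrω hτω
  exact inf_inf_eq_inf_of_le (hle ω) hrω hτω

/-- If `𝒢` is the progressive enlargement of `𝒻` by a random time `θ`
(encoded via `𝒻 ⊆ 𝒢`, `θ` a `𝒢`-stopping time, and the classical reduction fact that any
`𝒢`-stopping time agrees with an `𝒻`-stopping time before `θ`), then for any two finite
`𝒢`-stopping times `σ̂ ≤ τ̂` there are finite `𝒻`-stopping times `σ ≤ τ` with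
`σ ∧ θ = σ̂ ∧ θ` and `τ ∧ θ = τ̂ ∧ θ` a.s. -/
theorem reduction_of_ordered_stopping_times
    {Ω : Type*} {m0 : MeasurableSpace Ω} (μ : Measure Ω) [IsProbabilityMeasure μ]
    (𝒻 𝒢 : Filtration ℝ m0) (θ : Ω → ℝ) (hθpos : ∀ ω, 0 < θ ω)
    (hFG : ∀ t, 𝒻 t ≤ 𝒢 t) (hθG : IsStoppingTime 𝒢 (fun ω => (θ ω : WithTop ℝ)))
    (hred : ∀ ρ : Ω → ℝ, IsStoppingTime 𝒢 (fun ω => (ρ ω : WithTop ℝ)) →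
      ∃ r : Ω → ℝ, IsStoppingTime 𝒻 (fun ω => (r ω : WithTop ℝ)) ∧ ∀ᵐ ω ∂μ, min (r ω) (θ ω) = min (ρ ω) (θ ω))
    (sigmahat tauhat : Ω → ℝ)
    (hsig : IsStoppingTime 𝒢 (fun ω => (sigmahat ω : WithTop ℝ))) (htau : IsStoppingTime 𝒢 (fun ω => (tauhat ω : WithTop ℝ)))
    (hle : sigmahat ≤ tauhat) :
    ∃ σ τ : Ω → ℝ, IsStoppingTime 𝒻 (fun ω => (σ ω : WithTop ℝ)) ∧ IsStoppingTime 𝒻 (fun ω => (τ ω : WithTop ℝ)) ∧ σ ≤ τ ∧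
      (∀ᵐ ω ∂μ, min (σ ω) (θ ω) = min (sigmahat ω) (θ ω)) ∧
      (∀ᵐ ω ∂μ, min (τ ω) (θ ω) = min (tauhat ω) (θ ω)) :=
  reduction_of_ordered_stopping_times_general μ 𝒻 𝒢 θ hred sigmahat tauhat hsig htau hle
end

section
/- Let X and R be bounded F-optional processes and define the reward process X̂ := X 1_{⟦0,θ⟦} + R_θ 1_{⟦θ,∞⟦}. For a finite F-stopping time τ, define the process X(τ) := R 1_{⟦0,τ⟧} + X_τ 1_{⟧τ,∞⟦}. Then X(τ) is optional with respect to the stopped filtration F^τ = (F_{t∧τ}), and X̂_τ = X_θ(τ) almost surely, i.e. X̂_τ = R_θ 1_{θ ≤ τ} + X_τ 1_{θ > τ}. -/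
open MeasureTheory Filter Set

variable {Ω : Type*}

/-- The optional σ-field on `ℝ × Ω` associated with a family of σ-fields `ℱ`:
the σ-field generated by all adapted processes with càdlàg paths. -/
def optionalSigma (ℱ : ℝ → MeasurableSpace Ω) : MeasurableSpace (ℝ × Ω) :=
  ⨆ (Y : ℝ → Ω → ℝ) (_ : (∀ t, Measurable[ℱ t] (Y t)) ∧
      (∀ ω t, ContinuousWithinAt (fun s => Y s ω) (Set.Ici t) t) ∧
      (∀ ω t, ∃ l : ℝ, Tendsto (fun s => Y s ω) (nhdsWithin t (Set.Iio t)) (nhds l))),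
    MeasurableSpace.comap (fun p : ℝ × Ω => Y p.1 p.2) inferInstance

/-- A process is optional if it is measurable with respect to the optional σ-field. -/
def IsOptional (ℱ : ℝ → MeasurableSpace Ω) (X : ℝ → Ω → ℝ) : Prop :=
  Measurable[optionalSigma ℱ] fun p : ℝ × Ω => X p.1 p.2

/-!
The time change `Φ (t, ω) = (t ∧ τ ω, ω)` is measurable from the `F^τ`-optional to the
`F`-optional σ-field: a càdlàg adapted generator `Y` pulls back to the stopped process `Y^τ`,
which is again càdlàg, and which is `F_{t∧τ}`-adapted because right continuity makes `Y`
progressive (approximate the time from the right along a grid) and stopped values of progressive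
processes are measurable for the stopped σ-field. Since `X(τ) = R ∘ Φ` on `{t ≤ τ}` and
`X(τ) = X ∘ Φ` elsewhere, and `{t ≤ τ} = {t ≤ t ∧ τ}` is `F^τ`-optional, `X(τ)` is
`F^τ`-optional. The identity `X̂_τ = X_θ(τ)` holds pointwise.
-/

open Topology TopologicalSpace

theorem tendsto_ceil_mul_div_nhdsGE (s : ℝ) :
    Tendsto (fun n : ℕ => (⌈s * (n + 1)⌉ : ℝ) / (n + 1)) atTop (𝓝[≥] s) := by
  have lower (n : ℕ) : s ≤ (⌈s * (n + 1)⌉ : ℝ) / (n + 1) := by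
    rw [le_div_iff₀ (by positivity)]; exact Int.le_ceil _
  have upper (n : ℕ) : (⌈s * (n + 1)⌉ : ℝ) / (n + 1) ≤ s + 1 / (n + 1) := by
    rw [div_le_iff₀ (by positivity), add_mul, one_div_mul_cancel (by positivity)]
    exact (Int.ceil_lt_add_one _).le
  have hs : Tendsto (fun n : ℕ => s + 1 / ((n : ℝ) + 1)) atTop (𝓝 s) := by
    simpa using tendsto_const_nhds.add (tendsto_one_div_add_atTop_nhds_zero_nat (𝕜 := ℝ))
  exact tendsto_nhdsWithin_iff.2 ⟨tendsto_of_tendsto_of_tendsto_of_le_of_le tendsto_const_nhds hs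
    lower upper, Eventually.of_forall lower⟩

section Progressive

variable {β : Type*} [TopologicalSpace β] [PseudoMetrizableSpace β] [MeasurableSpace β]
  [BorelSpace β]

theorem measurable_Iic_prod_of_continuousWithinAt_Ici {α : Type*} [MeasurableSpace α]
    {u : ℝ → α → β} {i : ℝ} (hu : ∀ s ≤ i, Measurable (u s))
    (hrc : ∀ a t, ContinuousWithinAt (u · a) (Ici t) t) :
    Measurable fun p : Iic i × α => u p.1 p.2 := by
  let grid (n : ℕ) (s : ℝ) : ℝ := min i ((⌈s * (n + 1)⌉ : ℝ) / (n + 1))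
  have grid_meas (n : ℕ) : Measurable fun p : Iic i × α => u (grid n p.1) p.2 := by
    have on_grid : Measurable fun q : ℤ × α => u (min i (q.1 / (n + 1))) q.2 :=
      measurable_from_prod_countable_right fun k => hu (min i (k / (n + 1))) (min_le_left _ _)
    exact on_grid.comp ((measurable_fst.subtype_val.mul_const _).ceil.prodMk measurable_snd)
  refine measurable_of_tendsto_metrizable grid_meas (tendsto_pi_nhds.2 fun p => ?_)
  have hgrid : Tendsto (fun n => grid n p.1) atTop (𝓝[≥] (p.1 : ℝ)) := by
    obtain ⟨h, h_ge⟩ := tendsto_nhdsWithin_iff.1 (tendsto_ceil_mul_div_nhdsGE (p.1 : ℝ))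
    have hp : (p.1 : ℝ) ≤ i := p.1.2
    refine tendsto_nhdsWithin_iff.2 ⟨?_, h_ge.mono fun n hn => le_min hp hn⟩
    simpa only [min_eq_right hp] using (tendsto_const_nhds (x := i)).min h
  exact (hrc p.2 p.1).tendsto.comp hgrid

variable {m : MeasurableSpace Ω} {𝒻 : Filtration ℝ m} {u : ℝ → Ω → β}

theorem MeasureTheory.Adapted.isProgressive_of_continuousWithinAt_Ici (hu : Adapted 𝒻 u)
    (hrc : ∀ ω t, ContinuousWithinAt (u · ω) (Ici t) t) : IsProgressive 𝒻 u := fun i =>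
  @measurable_Iic_prod_of_continuousWithinAt_Ici _ _ _ _ _ _ (𝒻 i) _ _
    (fun s hs => (hu s).mono (𝒻.mono hs) le_rfl) hrc

theorem MeasureTheory.Adapted.measurable_comp_min_stoppingTime [SecondCountableTopology β]
    (hu : Adapted 𝒻 u) (hrc : ∀ ω t, ContinuousWithinAt (u · ω) (Ici t) t) {τ : Ω → ℝ}
    (hτ : IsStoppingTime 𝒻 (fun ω => (τ ω : WithTop ℝ))) (t : ℝ) :
    Measurable[(hτ.min_const t).measurableSpace] fun ω => u (min t (τ ω)) ω := by
  have := measurable_stoppedValue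
    (hu.isProgressive_of_continuousWithinAt_Ici hrc).isStronglyProgressive (hτ.min_const t)
  convert this using 2 with ω
  rw [stoppedValue, min_comm, ← WithTop.coe_min]
  rfl

end Progressive

theorem continuousWithinAt_Ici_comp_min_const {α : Type*} [TopologicalSpace α] {g : ℝ → α}
    (hg : ∀ t, ContinuousWithinAt g (Ici t) t) (c t : ℝ) :
    ContinuousWithinAt (fun s => g (min s c)) (Ici t) t :=
  (hg (min t c)).comp (f := fun s => min s c)
    (continuous_id.min continuous_const).continuousWithinAt fun _ hs => min_le_min_right c hs

theorem exists_tendsto_nhdsLT_comp_min_const {α : Type*} [TopologicalSpace α] {g : ℝ → α}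
    (hg : ∀ t, ∃ l, Tendsto g (𝓝[<] t) (𝓝 l)) (c t : ℝ) :
    ∃ l, Tendsto (fun s => g (min s c)) (𝓝[<] t) (𝓝 l) := by
  rcases le_or_gt t c with htc | hct
  · obtain ⟨l, hl⟩ := hg t
    refine ⟨l, hl.congr' ?_⟩
    filter_upwards [self_mem_nhdsWithin] with s hs
    rw [min_eq_left (hs.out.le.trans htc)]
  · refine ⟨g c, tendsto_const_nhds.congr' ?_⟩
    filter_upwards [eventually_nhdsWithin_of_eventually_nhds (eventually_gt_nhds hct)] with s hs
    rw [min_eq_right hs.le]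

def IsAdaptedCadlag (ℱ : ℝ → MeasurableSpace Ω) (Y : ℝ → Ω → ℝ) : Prop :=
  (∀ t, Measurable[ℱ t] (Y t)) ∧
    (∀ ω t, ContinuousWithinAt (fun s => Y s ω) (Ici t) t) ∧
    (∀ ω t, ∃ l : ℝ, Tendsto (fun s => Y s ω) (𝓝[<] t) (𝓝 l))

theorem IsAdaptedCadlag.isOptional {ℱ : ℝ → MeasurableSpace Ω} {Y : ℝ → Ω → ℝ}
    (hY : IsAdaptedCadlag ℱ Y) : IsOptional ℱ Y :=
  measurable_iff_comap_le.2 (le_iSup₂_of_le Y hY le_rfl)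

theorem isAdaptedCadlag_time (ℱ : ℝ → MeasurableSpace Ω) : IsAdaptedCadlag ℱ fun s _ => s :=
  ⟨fun _ => measurable_const, fun _ _ => continuousWithinAt_id,
    fun _ t => ⟨t, continuousWithinAt_id⟩⟩

theorem measurable_to_optionalSigma {α : Type*} [mα : MeasurableSpace α]
    {ℱ : ℝ → MeasurableSpace Ω} {Φ : α → ℝ × Ω}
    (h : ∀ Y, IsAdaptedCadlag ℱ Y → Measurable fun a => Y (Φ a).1 (Φ a).2) :
    Measurable[_, optionalSigma ℱ] Φ := by
  rw [measurable_iff_comap_le, optionalSigma]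
  simp_rw [MeasurableSpace.comap_iSup, MeasurableSpace.comap_comp]
  exact iSup₂_le fun Y hY => measurable_iff_comap_le.1 (h Y hY)

section Stopped

variable {m : MeasurableSpace Ω} {𝒻 : Filtration ℝ m} {τ : Ω → ℝ}

theorem IsAdaptedCadlag.stopped {Y : ℝ → Ω → ℝ} (hY : IsAdaptedCadlag (fun t => 𝒻 t) Y)
    (hτ : IsStoppingTime 𝒻 (fun ω => (τ ω : WithTop ℝ))) :
    IsAdaptedCadlag (fun t => (hτ.min_const t).measurableSpace)
      fun s ω => Y (min s (τ ω)) ω := by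
  obtain ⟨hA, hrc, hll⟩ := hY
  refine ⟨fun t => ?_, fun ω => continuousWithinAt_Ici_comp_min_const (hrc ω) (τ ω),
    fun ω => exists_tendsto_nhdsLT_comp_min_const (hll ω) (τ ω)⟩
  simpa only [min_comm t] using Adapted.measurable_comp_min_stoppingTime hA hrc hτ t

theorem measurable_min_stoppingTime (hτ : IsStoppingTime 𝒻 (fun ω => (τ ω : WithTop ℝ))) :
    Measurable[optionalSigma fun t => (hτ.min_const t).measurableSpace,
      optionalSigma fun t => 𝒻 t] fun p : ℝ × Ω => (min p.1 (τ p.2), p.2) :=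
  measurable_to_optionalSigma (mα := optionalSigma fun t => (hτ.min_const t).measurableSpace)
    fun _ hY => (hY.stopped hτ).isOptional

theorem IsOptional.comp_min_stoppingTime {Z : ℝ → Ω → ℝ} (hZ : IsOptional (fun t => 𝒻 t) Z)
    (hτ : IsStoppingTime 𝒻 (fun ω => (τ ω : WithTop ℝ))) :
    IsOptional (fun t => (hτ.min_const t).measurableSpace) fun t ω => Z (min t (τ ω)) ω :=
  hZ.comp (measurable_min_stoppingTime hτ)

theorem measurableSet_optionalSigma_le_stoppingTime
    (hτ : IsStoppingTime 𝒻 (fun ω => (τ ω : WithTop ℝ))) :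
    MeasurableSet[optionalSigma fun t => (hτ.min_const t).measurableSpace]
      {p : ℝ × Ω | p.1 ≤ τ p.2} := by
  have hmin := ((isAdaptedCadlag_time _).isOptional).comp_min_stoppingTime hτ
  have hfst := (isAdaptedCadlag_time fun t => (hτ.min_const t).measurableSpace).isOptional
  convert measurableSet_le hfst hmin using 2 with p
  simp

end Stopped

theorem reward_reduction_optional_general
    {m0 : MeasurableSpace Ω} (μ : Measure Ω)
    (𝒻 : Filtration ℝ m0) (θ : Ω → ℝ)
    (X R : ℝ → Ω → ℝ)
    (hXopt : IsOptional (fun t => (𝒻 t : MeasurableSpace Ω)) X)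
    (hRopt : IsOptional (fun t => (𝒻 t : MeasurableSpace Ω)) R)
    (τ : Ω → ℝ) (hτ : IsStoppingTime 𝒻 (fun ω => (τ ω : WithTop ℝ))) :
    IsOptional (fun t => ((hτ.min_const t).measurableSpace : MeasurableSpace Ω))
        (fun t ω => if t ≤ τ ω then R t ω else X (τ ω) ω) ∧
      ∀ᵐ ω ∂μ,
        (if τ ω < θ ω then X (τ ω) ω else R (θ ω) ω)
          = (if θ ω ≤ τ ω then R (θ ω) ω else X (τ ω) ω) := by
  refine ⟨?_, ae_of_all μ fun ω => ?_⟩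
  · have stopped_form : (fun p : ℝ × Ω => if p.1 ≤ τ p.2 then R p.1 p.2 else X (τ p.2) p.2)
        = fun p => if p.1 ≤ τ p.2 then R (min p.1 (τ p.2)) p.2 else X (min p.1 (τ p.2)) p.2 := by
      ext p
      split_ifs with h
      · rw [min_eq_left h]
      · rw [min_eq_right (not_le.1 h).le]
    unfold IsOptional
    rw [stopped_form]
    exact Measurable.ite (measurableSet_optionalSigma_le_stoppingTime hτ)
      (hRopt.comp_min_stoppingTime hτ) (hXopt.comp_min_stoppingTime hτ)
  · by_cases h : θ ω ≤ τ ω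
    · rw [if_neg h.not_gt, if_pos h]
    · rw [if_pos (not_le.1 h), if_neg h]

/-- For bounded `F`-optional `X, R`, reward `X̂ = X 1_{⟦0,θ⟦} + R_θ 1_{⟦θ,∞⟦}`
and a finite `F`-stopping time `τ`, the process `X(τ) = R 1_{⟦0,τ⟧} + X_τ 1_{⟧τ,∞⟦}`
is optional for the stopped filtration `F^τ = (F_{t∧τ})_t`, and `X̂_τ = X_θ(τ)` a.s., i.e.
`X̂_τ = R_θ 1_{θ ≤ τ} + X_τ 1_{θ > τ}`. -/
theorem reward_reduction_optional
    {m0 : MeasurableSpace Ω} (μ : Measure Ω) [IsProbabilityMeasure μ]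
    (𝒻 : Filtration ℝ m0) (θ : Ω → ℝ) (hθmeas : Measurable θ) (hθpos : ∀ ω, 0 < θ ω)
    (X R : ℝ → Ω → ℝ)
    (hXopt : IsOptional (fun t => (𝒻 t : MeasurableSpace Ω)) X)
    (hRopt : IsOptional (fun t => (𝒻 t : MeasurableSpace Ω)) R)
    (hXbd : ∃ C, ∀ t ω, |X t ω| ≤ C) (hRbd : ∃ C, ∀ t ω, |R t ω| ≤ C)
    (τ : Ω → ℝ) (hτ : IsStoppingTime 𝒻 (fun ω => (τ ω : WithTop ℝ))) :
    IsOptional (fun t => ((hτ.min_const t).measurableSpace : MeasurableSpace Ω))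
        (fun t ω => if t ≤ τ ω then R t ω else X (τ ω) ω) ∧
      ∀ᵐ ω ∂μ,
        (if τ ω < θ ω then X (τ ω) ω else R (θ ω) ω)
          = (if θ ω ≤ τ ω then R (θ ω) ω else X (τ ω) ω) :=
  reward_reduction_optional_general μ 𝒻 θ X R hXopt hRopt τ hτ
end
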